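/- arXiv:2002.05839 — 2 statements merged into one kernel-verified Lean document; each statement's English description precedes it below -/
import Mathlib

section
/- The Exponential Mechanism M_q with quality score q and range S_q, which on input x samples y ∈ Y with probability proportional to exp(ε·q(x,y)/S_q), is ε-bounded range, and hence ε-differentially private. -/
/-- The probability that the Exponential Mechanism with quality score `q`, privacy parameter
`ε` and normalizer `Sq` outputs `y` on input `x`: proportional to `exp(ε·q(x,y)/Sq)`. -/
noncomputable def emProb {X Y : Type*} [Fintype Y] (q : X → Y → ℝ) (ε Sq : ℝ)
    (x : X) (y : Y) : ℝ :=
  Real.exp (ε * q x y / Sq) / ∑ y' : Y, Real.exp (ε * q x y' / Sq)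

/-- The range `S_q` of the quality score `q`: the supremum over neighboring inputs `x ∼ x'`
of `max_y (q(x,y) − q(x',y)) − min_{y'} (q(x,y') − q(x',y'))`. -/
noncomputable def qualityRange {X Y : Type*} [Fintype Y] [Nonempty Y]
    (Neighbor : X → X → Prop) (q : X → Y → ℝ) : ℝ :=
  sSup { r | ∃ x x', Neighbor x x' ∧
    r = (⨆ y, (q x y - q x' y)) - (⨅ y, (q x y - q x' y)) }

/-- The Exponential Mechanism `M_q`, which samples `y` with probability
proportional to `exp(ε·q(x,y)/S_q)`, is `ε`-bounded range and hence `ε`-differentially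
private. -/
theorem exponentialMechanism_br_and_dp {X Y : Type*} [Fintype Y] [Nonempty Y]
    (Neighbor : X → X → Prop) (q : X → Y → ℝ) (ε : ℝ) (hε : 0 < ε) :
    (∀ x x', Neighbor x x' → ∀ y₁ y₂ : Y,
      emProb q ε (qualityRange Neighbor q) x y₁ / emProb q ε (qualityRange Neighbor q) x' y₁
        ≤ Real.exp ε *
          (emProb q ε (qualityRange Neighbor q) x y₂ /
            emProb q ε (qualityRange Neighbor q) x' y₂))
    ∧ (∀ x x', Neighbor x x' → ∀ S : Finset Y,
      ∑ y ∈ S, emProb q ε (qualityRange Neighbor q) x y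
        ≤ Real.exp ε * ∑ y ∈ S, emProb q ε (qualityRange Neighbor q) x' y) := by
  set Sq := qualityRange Neighbor q with hSqdef
  have hZpos : ∀ (x : X), 0 < ∑ y' : Y, Real.exp (ε * q x y' / Sq) :=
    fun x => Finset.sum_pos (fun y _ => Real.exp_pos _) Finset.univ_nonempty
  by_cases h0 : Sq = 0
  · have huni : ∀ (x : X) (y : Y), emProb q ε Sq x y = 1 / (Fintype.card Y : ℝ) := by
      intro x y
      simp [emProb, h0, div_zero, Real.exp_zero, Finset.sum_const, nsmul_eq_mul, Finset.card_univ]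
    have hc : (0:ℝ) < 1 / (Fintype.card Y : ℝ) := by
      have : (0:ℝ) < (Fintype.card Y : ℝ) := by
        exact_mod_cast Fintype.card_pos
      positivity
    have he : (1:ℝ) ≤ Real.exp ε := Real.one_le_exp hε.le
    constructor
    · intro x x' _ y₁ y₂
      rw [huni, huni, huni, huni, div_self hc.ne']
      nlinarith
    · intro x x' _ S
      simp only [huni]
      have hs : 0 ≤ ∑ _y ∈ S, (1 / (Fintype.card Y : ℝ)) :=
        Finset.sum_nonneg fun _ _ => hc.le
      nlinarith
  · -- Sq > 0
    have hbdd : BddAbove { r | ∃ x x', Neighbor x x' ∧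
        r = (⨆ y, (q x y - q x' y)) - (⨅ y, (q x y - q x' y)) } := by
      by_contra h
      exact h0 (Real.sSup_of_not_bddAbove h)
    have hnonneg : 0 ≤ Sq := by
      apply Real.sSup_nonneg
      rintro r ⟨x, x', _, rfl⟩
      obtain ⟨y0⟩ := ‹Nonempty Y›
      have h1 : (⨅ y, (q x y - q x' y)) ≤ q x y0 - q x' y0 :=
        ciInf_le (Finite.bddBelow_range _) y0
      have h2 : q x y0 - q x' y0 ≤ ⨆ y, (q x y - q x' y) :=
        le_ciSup (Finite.bddAbove_range (fun y => q x y - q x' y)) y0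
      have : (⨅ y, (q x y - q x' y)) ≤ ⨆ y, (q x y - q x' y) := h1.trans h2
      linarith
    have hSqpos : 0 < Sq := lt_of_le_of_ne hnonneg (Ne.symm h0)
    -- common facts for a pair of neighbors
    have hrange : ∀ x x', Neighbor x x' →
        (⨆ y, (q x y - q x' y)) - (⨅ y, (q x y - q x' y)) ≤ Sq := by
      intro x x' hN
      exact le_csSup hbdd ⟨x, x', hN, rfl⟩
    constructor
    · intro x x' hN y₁ y₂
      have hM : ∀ y : Y, q x y - q x' y ≤ ⨆ y, (q x y - q x' y) :=
        fun y => le_ciSup (Finite.bddAbove_range (fun y => q x y - q x' y)) y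
      have hm : ∀ y : Y, (⨅ y, (q x y - q x' y)) ≤ q x y - q x' y :=
        fun y => ciInf_le (Finite.bddBelow_range (fun y => q x y - q x' y)) y
      have hd : (q x y₁ - q x' y₁) - (q x y₂ - q x' y₂) ≤ Sq := by
        have := hrange x x' hN
        have h1 := hM y₁
        have h2 := hm y₂
        linarith
      have key : ε * q x y₁ / Sq - ε * q x' y₁ / Sq
          ≤ ε + (ε * q x y₂ / Sq - ε * q x' y₂ / Sq) := by
        have h2 : ε * ((q x y₁ - q x' y₁) - (q x y₂ - q x' y₂)) / Sq ≤ ε := by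
          rw [div_le_iff₀ hSqpos]
          nlinarith
        have h3 : ε * q x y₁ / Sq - ε * q x' y₁ / Sq
            = ε * ((q x y₁ - q x' y₁) - (q x y₂ - q x' y₂)) / Sq
              + (ε * q x y₂ / Sq - ε * q x' y₂ / Sq) := by ring
        linarith
      have keyexp : Real.exp (ε * q x y₁ / Sq - ε * q x' y₁ / Sq)
          ≤ Real.exp ε * Real.exp (ε * q x y₂ / Sq - ε * q x' y₂ / Sq) := by
        rw [← Real.exp_add]
        exact Real.exp_le_exp.mpr key
      unfold emProb
      rw [div_div_div_comm, div_div_div_comm (Real.exp (ε * q x y₂ / Sq)),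
        ← Real.exp_sub, ← Real.exp_sub, mul_div_assoc']
      have hZZ : 0 < (∑ y' : Y, Real.exp (ε * q x y' / Sq)) /
          (∑ y' : Y, Real.exp (ε * q x' y' / Sq)) := div_pos (hZpos x) (hZpos x')
      exact (div_le_div_iff_of_pos_right hZZ).mpr keyexp
    · intro x x' hN S
      have hM : ∀ y : Y, q x y - q x' y ≤ ⨆ y, (q x y - q x' y) :=
        fun y => le_ciSup (Finite.bddAbove_range (fun y => q x y - q x' y)) y
      have hm : ∀ y : Y, (⨅ y, (q x y - q x' y)) ≤ q x y - q x' y :=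
        fun y => ciInf_le (Finite.bddBelow_range (fun y => q x y - q x' y)) y
      set M := ⨆ y, (q x y - q x' y) with hMdef
      set m := ⨅ y, (q x y - q x' y) with hmdef
      have hMmSq : M - m ≤ Sq := hrange x x' hN
      -- pointwise bound
      have point : ∀ y : Y, emProb q ε Sq x y ≤ Real.exp ε * emProb q ε Sq x' y := by
        intro y
        unfold emProb
        rw [mul_div_assoc', div_le_div_iff₀ (hZpos x) (hZpos x')]
        have hZ' : (∑ y' : Y, Real.exp (ε * q x' y' / Sq))
            ≤ Real.exp (-(ε * m / Sq)) * ∑ y' : Y, Real.exp (ε * q x y' / Sq) := by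
          rw [Finset.mul_sum]
          apply Finset.sum_le_sum
          intro i _
          rw [← Real.exp_add]
          apply Real.exp_le_exp.mpr
          have hmi := hm i
          have heq : -(ε * m / Sq) + ε * q x i / Sq - ε * q x' i / Sq
              = ε * ((q x i - q x' i) - m) / Sq := by ring
          have hnn : 0 ≤ ε * ((q x i - q x' i) - m) / Sq :=
            div_nonneg (mul_nonneg hε.le (by linarith)) hSqpos.le
          linarith [heq ▸ hnn]
        have hA : Real.exp (ε * q x y / Sq)
            ≤ Real.exp (ε * M / Sq) * Real.exp (ε * q x' y / Sq) := by
          rw [← Real.exp_add]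
          apply Real.exp_le_exp.mpr
          have hMy := hM y
          have heq : ε * M / Sq + ε * q x' y / Sq - ε * q x y / Sq
              = ε * (M - (q x y - q x' y)) / Sq := by ring
          have hnn : 0 ≤ ε * (M - (q x y - q x' y)) / Sq :=
            div_nonneg (mul_nonneg hε.le (by linarith)) hSqpos.le
          linarith [heq ▸ hnn]
        have hfac : Real.exp (ε * M / Sq) * Real.exp (-(ε * m / Sq)) ≤ Real.exp ε := by
          rw [← Real.exp_add]
          apply Real.exp_le_exp.mpr
          have : ε * M / Sq + -(ε * m / Sq) = ε * (M - m) / Sq := by ring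
          rw [this, div_le_iff₀ hSqpos]
          nlinarith
        calc Real.exp (ε * q x y / Sq) * ∑ y' : Y, Real.exp (ε * q x' y' / Sq)
            ≤ (Real.exp (ε * M / Sq) * Real.exp (ε * q x' y / Sq)) *
              (Real.exp (-(ε * m / Sq)) * ∑ y' : Y, Real.exp (ε * q x y' / Sq)) := by
              apply mul_le_mul hA hZ' (Finset.sum_nonneg fun _ _ => (Real.exp_pos _).le)
                (by positivity)
          _ = Real.exp (ε * q x' y / Sq) *
              ((Real.exp (ε * M / Sq) * Real.exp (-(ε * m / Sq))) *
                ∑ y' : Y, Real.exp (ε * q x y' / Sq)) := by ring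
          _ ≤ Real.exp (ε * q x' y / Sq) *
              (Real.exp ε * ∑ y' : Y, Real.exp (ε * q x y' / Sq)) := by
              apply mul_le_mul_of_nonneg_left ?_ (Real.exp_pos _).le
              exact mul_le_mul_of_nonneg_right hfac (hZpos x).le
          _ = Real.exp ε * Real.exp (ε * q x' y / Sq) *
              ∑ y' : Y, Real.exp (ε * q x y' / Sq) := by ring
      calc ∑ y ∈ S, emProb q ε Sq x y
          ≤ ∑ y ∈ S, Real.exp ε * emProb q ε Sq x' y :=
            Finset.sum_le_sum fun y _ => point y
        _ = Real.exp ε * ∑ y ∈ S, emProb q ε Sq x' y := by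
            rw [Finset.mul_sum]
end

section
/- For a finite outcome set Y with values q(y) for y ∈ Y, adding independent Gumbel noise G_y ∼ Gum(b) to each q(y) and reporting the ordered sequence of the k outcomes with the largest noisy values yields the same distribution over ordered k-tuples as iteratively peeling with the Exponential Mechanism: sampling y₁ with probability proportional to exp(q(y)/b) over Y, then y₂ with probability proportional to exp(q(y)/b) over Y \ {y₁}, and so on for k rounds. -/
open MeasureTheory

/-- Density of the Gumbel distribution `Gum(b)`. -/
noncomputable def gumPdf (b z : ℝ) : ℝ := (1 / b) * Real.exp (-(z / b + Real.exp (-(z / b))))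

/-- The Gumbel distribution `Gum(b)` as a measure on `ℝ`. -/
noncomputable def gumMeasure (b : ℝ) : Measure ℝ :=
  volume.withDensity fun z => ENNReal.ofReal (gumPdf b z)

/-!
Write `w z = exp (q z / b)`. For `G ∼ Gum(b)`,
`E[exp (-t e^{-G/b}); G < c] = exp (-(1 + t) e^{-c/b}) / (1 + t)`; at `t = 0` this gives
`P(q z + G_z < T) = exp (-w z e^{-T/b})`. Add a threshold `T` to the event (the noisy values rank
`y₁, …, y_k` on top and all lie below `T`); its probability is then
`peelingProb w y · exp (-(∑ w) e^{-T/b})`, by induction on `k`: given the noise `s` of `y₁`, the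
event is the same event for `y₂, …, y_k` among the other outcomes with threshold `q y₁ + s`, and
integrating the inductive formula over `s < T - q y₁` is the integral above with
`t = (∑_{z ≠ y₁} w z) / w y₁`, which yields the factor `w y₁ / ∑ w`. Letting `T → ∞` removes the
threshold.
-/

open Set Real Filter Topology
open scoped ENNReal

theorem lintegral_Iio_of_hasDerivAt_of_nonneg {f f' : ℝ → ℝ} {m : ℝ}
    (hderiv : ∀ x, HasDerivAt f (f' x) x) (hf' : ∀ x, 0 ≤ f' x) (hf : Tendsto f atBot (𝓝 m))
    (c : ℝ) : ∫⁻ x in Iio c, ENNReal.ofReal (f' x) = ENNReal.ofReal (f c - m) := by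
  have hderiv_neg : ∀ x, HasDerivAt (fun x => -f (-x)) (f' (-x)) x := fun x => by
    simpa using ((hderiv (-x)).comp x (hasDerivAt_neg x)).fun_neg
  have hf_neg : Tendsto (fun x => -f (-x)) atTop (𝓝 (-m)) :=
    (hf.comp tendsto_neg_atTop_atBot).neg
  have hint := (integrableOn_Ioi_deriv_of_nonneg' (a := -c) (fun x _ => hderiv_neg x)
      (fun x _ => hf' _) hf_neg).comp_neg_Iio
  simp only [neg_neg] at hint
  rw [← ofReal_integral_eq_lintegral_ofReal hint (.of_forall hf'),
    ← integral_Iic_eq_integral_Iio, ← neg_neg c, ← integral_comp_neg_Ioi,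
    integral_Ioi_of_hasDerivAt_of_nonneg' (fun x _ => hderiv_neg x) (fun x _ => hf' _) hf_neg]
  simp only [neg_neg, sub_neg_eq_add, neg_add_eq_sub]

theorem gumPdf_nonneg {b : ℝ} (hb : 0 ≤ b) (z : ℝ) : 0 ≤ gumPdf b z := by
  unfold gumPdf; positivity

instance (b : ℝ) : SigmaFinite (gumMeasure b) := SigmaFinite.withDensity_ofReal _

theorem setLIntegral_gumMeasure_Iio_exp {b t : ℝ} (hb : 0 < b) (ht : -1 < t) (c : ℝ) :
    ∫⁻ s in Iio c, ENNReal.ofReal (exp (-(t * exp (-(s / b))))) ∂gumMeasure b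
      = ENNReal.ofReal (exp (-((1 + t) * exp (-(c / b)))) / (1 + t)) := by
  have ht' : 0 < 1 + t := by linarith
  set F : ℝ → ℝ := fun s => exp (-((1 + t) * exp (-(s / b)))) / (1 + t)
  have hF : ∀ s, HasDerivAt F (gumPdf b s * exp (-(t * exp (-(s / b))))) s := fun s => by
    refine ((((((hasDerivAt_id s).div_const b).fun_neg.exp).const_mul (1 + t)).fun_neg.exp
      ).div_const (1 + t)).congr_deriv ?_
    have hsplit : exp (-((1 + t) * exp (-(s / b))))
        = exp (-exp (-(s / b))) * exp (-(t * exp (-(s / b)))) := by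
      rw [← exp_add]; ring_nf
    simp only [id, gumPdf, neg_add, exp_add, hsplit]
    field_simp
  have hF_atBot : Tendsto F atBot (𝓝 0) := by
    have h := (tendsto_exp_atTop.comp
      (tendsto_neg_atBot_atTop.atTop_div_const hb)).const_mul_atTop ht'
    simpa [F, neg_div] using
      (tendsto_exp_atBot.comp (tendsto_neg_atTop_atBot.comp h)).div_const (1 + t)
  rw [gumMeasure, setLIntegral_withDensity_eq_setLIntegral_mul _ (by fun_prop [gumPdf])
    (by fun_prop) measurableSet_Iio]
  simp_rw [Pi.mul_apply, ← ENNReal.ofReal_mul (gumPdf_nonneg hb.le _)]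
  rw [lintegral_Iio_of_hasDerivAt_of_nonneg hF
    (fun s => by positivity [gumPdf_nonneg hb.le s]) hF_atBot, sub_zero]

theorem gumMeasure_Iio {b : ℝ} (hb : 0 < b) (c : ℝ) :
    gumMeasure b (Iio c) = ENNReal.ofReal (exp (-exp (-(c / b)))) := by
  simpa using setLIntegral_gumMeasure_Iio_exp hb neg_one_lt_zero c

theorem pi_gumMeasure_lt {Y : Type*} [Fintype Y] {b : ℝ} (hb : 0 < b) (q : Y → ℝ) (T : ℝ) :
    Measure.pi (fun _ : Y => gumMeasure b) {g | ∀ z, q z + g z < T}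
      = ENNReal.ofReal (exp (-((∑ z, exp (q z / b)) * exp (-(T / b))))) := by
  have hbox : {g : Y → ℝ | ∀ z, q z + g z < T} = univ.pi fun z => Iio (T - q z) := by
    ext g; simp [lt_sub_iff_add_lt']
  rw [hbox, Measure.pi_pi]
  simp_rw [gumMeasure_Iio hb]
  rw [← ENNReal.ofReal_prod_of_nonneg fun _ _ => (exp_pos _).le, ← exp_sum, Finset.sum_mul,
    ← Finset.sum_neg_distrib]
  congr 3 with z
  rw [← exp_add]
  ring_nf

theorem measurePreserving_funSplitAt_symm {ι α : Type*} [Fintype ι] [DecidableEq ι]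
    [MeasurableSpace α] (μ : ι → Measure α) [∀ i, SigmaFinite (μ i)] (i : ι) :
    MeasurePreserving (Equiv.funSplitAt i α).symm
      ((μ i).prod (Measure.pi fun j : {j // j ≠ i} => μ j)) (Measure.pi μ) := by
  have hmeas : Measurable (Equiv.funSplitAt i α).symm := by
    refine measurable_pi_lambda _ fun j => ?_
    by_cases hj : j = i
    · simpa [hj] using measurable_fst
    · simpa [hj, Function.comp_def] using (measurable_pi_apply _).comp measurable_snd
  refine ⟨hmeas, (Measure.pi_eq fun s hs => ?_).symm⟩
  have hbox : (Equiv.funSplitAt i α).symm ⁻¹' univ.pi s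
      = s i ×ˢ univ.pi fun j : {j // j ≠ i} => s j := by
    ext ⟨a, h⟩
    simp only [mem_preimage, mem_univ_pi, mem_prod, Equiv.funSplitAt_symm_apply]
    constructor
    · intro H
      exact ⟨by simpa using H i, fun j => by simpa [j.2] using H j⟩
    · rintro ⟨ha, hh⟩ j
      by_cases hj : j = i
      · subst hj; simpa using ha
      · simpa [hj] using hh ⟨j, hj⟩
  rw [Measure.map_apply hmeas (.univ_pi hs), hbox, Measure.prod_prod, Measure.pi_pi,
    Fintype.prod_eq_mul_prod_subtype_ne _ i]

theorem pi_eq_lintegral_funSplitAt {ι α : Type*} [Fintype ι] [DecidableEq ι]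
    [MeasurableSpace α] (μ : ι → Measure α) [∀ i, SigmaFinite (μ i)] (i : ι)
    {S : Set (ι → α)} (hS : MeasurableSet S) :
    Measure.pi μ S = ∫⁻ a, Measure.pi (fun j : {j // j ≠ i} => μ j)
      {h | (Equiv.funSplitAt i α).symm (a, h) ∈ S} ∂μ i := by
  rw [← (measurePreserving_funSplitAt_symm μ i).measure_preimage hS.nullMeasurableSet,
    Measure.prod_apply ((measurePreserving_funSplitAt_symm μ i).measurable hS)]
  rfl

section Ranking

variable {Y : Type*} {k : ℕ}

def IsTopRanking (v : Y → ℝ) (y : Fin k → Y) : Prop :=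
  StrictAnti (v ∘ y) ∧ ∀ z, (∀ a, z ≠ y a) → ∀ a, v z < v (y a)

def peelTail {y : Fin (k + 1) → Y} (hy : Function.Injective y) : Fin k → {z // z ≠ y 0} :=
  fun a => ⟨y a.succ, hy.ne (Fin.succ_ne_zero a)⟩

theorem peelTail_injective {y : Fin (k + 1) → Y} (hy : Function.Injective y) :
    Function.Injective (peelTail hy) :=
  fun _ _ h => Fin.succ_injective _ (hy (congrArg Subtype.val h))

theorem isTopRanking_succ_iff {v : Y → ℝ} {y : Fin (k + 1) → Y} (hy : Function.Injective y) :
    IsTopRanking v y ↔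
      (∀ z : {z // z ≠ y 0}, v z < v (y 0)) ∧
        IsTopRanking (fun z : {z // z ≠ y 0} => v z) (peelTail hy) := by
  constructor
  · rintro ⟨hanti, hout⟩
    refine ⟨fun z => ?_, hanti.comp_strictMono Fin.strictMono_succ, fun z hz a => ?_⟩
    · by_cases hz : ∃ a : Fin k, z.1 = y a.succ
      · obtain ⟨a, ha⟩ := hz
        exact ha ▸ hanti (Fin.succ_pos a)
      · push Not at hz
        exact hout z (Fin.cases z.2 hz) 0
    · exact hout z (Fin.cases z.2 fun a h => hz a (Subtype.ext h)) a.succ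
  · rintro ⟨htop, hanti, hout⟩
    refine ⟨fun a a' haa' => ?_, fun z hz a => ?_⟩
    · induction a' using Fin.cases with
      | zero => exact absurd haa' (Fin.not_lt_zero a)
      | succ j =>
        induction a using Fin.cases with
        | zero => exact htop (peelTail hy j)
        | succ i => exact hanti (Fin.succ_lt_succ_iff.mp haa')
    · induction a using Fin.cases with
      | zero => exact htop ⟨z, hz 0⟩
      | succ i => exact hout ⟨z, hz 0⟩ (fun j h => hz j.succ (congrArg Subtype.val h)) i

theorem isTopRanking_succ_and_lt_iff {v : Y → ℝ} {y : Fin (k + 1) → Y}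
    (hy : Function.Injective y) (T : ℝ) :
    (IsTopRanking v y ∧ ∀ z, v z < T) ↔
      v (y 0) < T ∧ IsTopRanking (fun z : {z // z ≠ y 0} => v z) (peelTail hy) ∧
        ∀ z : {z // z ≠ y 0}, v z < v (y 0) := by
  rw [isTopRanking_succ_iff hy]
  constructor
  · rintro ⟨⟨htop, hrest⟩, hT⟩
    exact ⟨hT _, hrest, htop⟩
  · rintro ⟨hT, hrest, htop⟩
    refine ⟨⟨htop, hrest⟩, fun z => ?_⟩
    by_cases hz : z = y 0
    · exact hz ▸ hT
    · exact (htop ⟨z, hz⟩).trans hT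

theorem funSplitAt_symm_mem_isTopRanking_lt_iff [DecidableEq Y] (q : Y → ℝ)
    {y : Fin (k + 1) → Y} (hy : Function.Injective y) (T s : ℝ) (h : {z // z ≠ y 0} → ℝ) :
    (Equiv.funSplitAt (y 0) ℝ).symm (s, h) ∈ {g | IsTopRanking (q + g) y ∧ ∀ z, q z + g z < T} ↔
      q (y 0) + s < T ∧
        h ∈ {h | IsTopRanking ((fun z : {z // z ≠ y 0} => q z) + h) (peelTail hy) ∧
          ∀ z : {z // z ≠ y 0}, q z + h z < q (y 0) + s} := by
  set g := (Equiv.funSplitAt (y 0) ℝ).symm (s, h)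
  have hg0 : g (y 0) = s := by simp [g]
  have hg : ∀ z : {z // z ≠ y 0}, g z = h z := fun z => by simp [g, z.2]
  have hrestr : (fun z : {z // z ≠ y 0} => (q + g) z) = (fun z : {z // z ≠ y 0} => q z) + h :=
    funext fun z => by simp only [Pi.add_apply, hg]
  have := isTopRanking_succ_and_lt_iff (v := q + g) hy T
  rw [hrestr] at this
  simpa only [mem_ofPred_eq, Pi.add_apply, hg0, hg] using this

theorem isOpen_isTopRanking_lt [Finite Y] (q : Y → ℝ) (y : Fin k → Y) (T : ℝ) :
    IsOpen {g : Y → ℝ | IsTopRanking (q + g) y ∧ ∀ z, q z + g z < T} := by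
  simp only [IsTopRanking, StrictAnti, Function.comp_apply, Pi.add_apply, ofPred_and,
    ofPred_forall]
  refine .inter (.inter ?_ ?_)
    (isOpen_iInter_of_finite fun _ => isOpen_lt (by fun_prop) (by fun_prop))
  all_goals exact isOpen_iInter_of_finite fun _ => isOpen_iInter_of_finite fun _ =>
    isOpen_iInter_of_finite fun _ => isOpen_lt (by fun_prop) (by fun_prop)

variable [Fintype Y] [DecidableEq Y]

noncomputable def peelingProb (w : Y → ℝ) (y : Fin k → Y) : ℝ :=
  ∏ a, w (y a) / ∑ z ∈ Finset.univ.filter (fun z => ∀ j < a, y j ≠ z), w z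

theorem sum_filter_peelTail (w : Y → ℝ) {y : Fin (k + 1) → Y} (hy : Function.Injective y)
    (a : Fin k) :
    ∑ z ∈ Finset.univ.filter (fun z => ∀ j < a, peelTail hy j ≠ z), w z
      = ∑ z ∈ Finset.univ.filter (fun z => ∀ j < a.succ, y j ≠ z), w z := by
  refine Finset.sum_nbij Subtype.val (fun z hz => ?_) Subtype.val_injective.injOn
    (fun z hz => ?_) fun _ _ => rfl
  · simp only [Finset.mem_filter, Finset.mem_univ, true_and] at hz ⊢
    intro j hj
    induction j using Fin.cases with
    | zero => exact z.2.symm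
    | succ j => exact fun h => hz j (Fin.succ_lt_succ_iff.mp hj) (Subtype.ext h)
  · simp only [Finset.mem_coe, Finset.mem_filter, Finset.mem_univ, true_and] at hz
    refine ⟨⟨z, (hz 0 (Fin.succ_pos a)).symm⟩, ?_, rfl⟩
    simp only [Finset.mem_coe, Finset.mem_filter, Finset.mem_univ, true_and]
    exact fun j hj h => hz j.succ (Fin.succ_lt_succ_iff.mpr hj) (congrArg Subtype.val h)

theorem peelingProb_succ (w : Y → ℝ) {y : Fin (k + 1) → Y} (hy : Function.Injective y) :
    peelingProb w y
      = w (y 0) / (∑ z, w z) * peelingProb (fun z : {z // z ≠ y 0} => w z) (peelTail hy) := by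
  simp only [peelingProb, Fin.prod_univ_succ, sum_filter_peelTail w hy, Fin.not_lt_zero,
    IsEmpty.forall_iff, implies_true, Finset.filter_true]
  rfl

end Ranking

theorem pi_gumMeasure_isTopRanking_lt {b : ℝ} (hb : 0 < b) (k : ℕ) {Y : Type*} [Fintype Y]
    [DecidableEq Y] (q : Y → ℝ) {y : Fin k → Y} (hy : Function.Injective y) (T : ℝ) :
    Measure.pi (fun _ : Y => gumMeasure b) {g | IsTopRanking (q + g) y ∧ ∀ z, q z + g z < T}
      = ENNReal.ofReal (peelingProb (fun z => exp (q z / b)) y)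
        * ENNReal.ofReal (exp (-((∑ z, exp (q z / b)) * exp (-(T / b))))) := by
  induction k generalizing Y T with
  | zero =>
    simp [IsTopRanking, StrictAnti, peelingProb, pi_gumMeasure_lt hb]
  | succ k ih =>
    rw [pi_eq_lintegral_funSplitAt _ (y 0) (isOpen_isTopRanking_lt q y T).measurableSet]
    set w0 := exp (q (y 0) / b)
    set W' := ∑ z : {z // z ≠ y 0}, exp (q z / b)
    have hw0 : 0 < w0 := exp_pos _
    have hW' : 0 ≤ W' := by positivity
    have hsection : ∀ s, Measure.pi (fun _ : {z // z ≠ y 0} => gumMeasure b)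
        {h | (Equiv.funSplitAt (y 0) ℝ).symm (s, h) ∈
          {g | IsTopRanking (q + g) y ∧ ∀ z, q z + g z < T}}
        = (Iio (T - q (y 0))).indicator (fun s =>
            ENNReal.ofReal (peelingProb (fun z : {z // z ≠ y 0} => exp (q z / b)) (peelTail hy))
              * ENNReal.ofReal (exp (-(W' / w0 * exp (-(s / b)))))) s := by
      intro s
      have hshift : W' * exp (-((q (y 0) + s) / b)) = W' / w0 * exp (-(s / b)) := by
        rw [div_mul_eq_mul_div, mul_div_assoc, ← exp_sub]; ring_nf
      simp_rw [funSplitAt_symm_mem_isTopRanking_lt_iff q hy]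
      by_cases hs : q (y 0) + s < T
      · rw [indicator_of_mem (by simpa [lt_sub_iff_add_lt'] using hs), ← hshift,
          ← ih _ (peelTail_injective hy)]
        simp only [hs, true_and, ofPred_mem_eq]
      · rw [indicator_of_notMem (by simpa [lt_sub_iff_add_lt'] using hs)]
        simp [hs]
    have hexp : (1 + W' / w0) * exp (-((T - q (y 0)) / b)) = (w0 + W') * exp (-(T / b)) := by
      rw [show exp (-((T - q (y 0)) / b)) = w0 * exp (-(T / b)) by rw [← exp_add]; ring_nf]
      field_simp
    have hfrac : ∀ x, x / (1 + W' / w0) = w0 / (w0 + W') * x := fun x => by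
      field_simp
    rw [lintegral_congr hsection, lintegral_indicator measurableSet_Iio,
      lintegral_const_mul _ (by fun_prop),
      setLIntegral_gumMeasure_Iio_exp hb (by linarith [div_nonneg hW' hw0.le]),
      peelingProb_succ _ hy, Fintype.sum_eq_add_sum_subtype_ne _ (y 0), hexp, hfrac,
      ENNReal.ofReal_mul (by positivity), ENNReal.ofReal_mul (by positivity)]
    ring

/-- Adding independent `Gum(b)` noise to each value `q(y)` and reporting the
ordered sequence of the `k` outcomes with the largest noisy values has the same distribution
over ordered `k`-tuples as iteratively peeling with the Exponential Mechanism: the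
probability of observing the (injective) ordered tuple `y₁, …, y_k` is
`∏_{a} exp(q(y_a)/b) / ∑_{z ∉ {y₁,…,y_{a−1}}} exp(q(z)/b)`. -/
theorem gumbel_topk_eq_peeling_exponential_mechanism {Y : Type*} [Fintype Y] [DecidableEq Y]
    (q : Y → ℝ) (b : ℝ) (hb : 0 < b) (k : ℕ) (y : Fin k → Y) (hy : Function.Injective y) :
    (Measure.pi fun _ : Y => gumMeasure b)
        {g : Y → ℝ |
          (∀ a a' : Fin k, a < a' → q (y a') + g (y a') < q (y a) + g (y a)) ∧
          (∀ z : Y, (∀ a : Fin k, z ≠ y a) → ∀ a : Fin k, q z + g z < q (y a) + g (y a))}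
      = ENNReal.ofReal (∏ a : Fin k,
          Real.exp (q (y a) / b) /
            ∑ z ∈ Finset.univ.filter (fun z => ∀ j : Fin k, j < a → y j ≠ z),
              Real.exp (q z / b)) := by
  change Measure.pi _ {g | IsTopRanking (q + g) y}
    = ENNReal.ofReal (peelingProb (fun z => exp (q z / b)) y)
  have hunion : {g : Y → ℝ | IsTopRanking (q + g) y}
      = ⋃ T : ℝ, {g | IsTopRanking (q + g) y ∧ ∀ z, q z + g z < T} := by
    ext g
    refine ⟨fun hg => ?_, fun hg => (mem_iUnion.mp hg).choose_spec.1⟩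
    obtain ⟨M, hM⟩ := Finite.exists_le fun z => q z + g z
    exact mem_iUnion.mpr ⟨M + 1, hg, fun z => (hM z).trans_lt (lt_add_one M)⟩
  have hmono : Monotone fun T : ℝ => {g : Y → ℝ | IsTopRanking (q + g) y ∧ ∀ z, q z + g z < T} :=
    fun _ _ hTT' _ hg => ⟨hg.1, fun z => (hg.2 z).trans_le hTT'⟩
  have hlim : Tendsto (fun T => exp (-((∑ z, exp (q z / b)) * exp (-(T / b))))) atTop (𝓝 1) := by
    have h0 : Tendsto (fun T => exp (-(T / b))) atTop (𝓝 0) :=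
      tendsto_exp_atBot.comp (tendsto_neg_atTop_atBot.comp (tendsto_id.atTop_div_const hb))
    simpa [Function.comp_def] using
      (continuous_exp.tendsto _).comp ((h0.const_mul (∑ z, exp (q z / b))).neg)
  rw [hunion]
  refine tendsto_nhds_unique (tendsto_measure_iUnion_atTop hmono) ?_
  simp_rw [Function.comp_def, pi_gumMeasure_isTopRanking_lt hb k q hy]
  simpa using ENNReal.Tendsto.const_mul (ENNReal.tendsto_ofReal hlim) (Or.inr ENNReal.ofReal_ne_top)
end
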